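/- arXiv:1703.02208 — 8 statements merged into one kernel-verified Lean document; each statement's English description precedes it below -/
import Mathlib

section
/- If ψ is a conditionally negative length function on a discrete group G, then √ψ is subadditive: √ψ(gh) ≤ √ψ(g) + √ψ(h) for all g, h ∈ G. -/
open ComplexOrder

/-- A conditionally negative length function on a discrete group `G`. -/
def IsCondNegLength {G : Type*} [Group G] (ψ : G → ℝ) : Prop :=
  ψ 1 = 0 ∧ (∀ g : G, ψ g = ψ g⁻¹) ∧
    ∀ (s : Finset G) (a : G → ℂ), (∑ g ∈ s, a g) = 0 →
      (∑ g ∈ s, ∑ h ∈ s, (starRingEnd ℂ) (a g) * a h * (ψ (g⁻¹ * h) : ℂ)) ≤ 0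

theorem sqrt_condNeg_subadditive {G : Type*} [Group G] (ψ : G → ℝ)
    (hnonneg : ∀ g, 0 ≤ ψ g) (hψ : IsCondNegLength ψ) :
    ∀ g h : G, Real.sqrt (ψ (g * h)) ≤ Real.sqrt (ψ g) + Real.sqrt (ψ h) := by
  classical
  obtain ⟨h1, hsymm, hcn⟩ := hψ
  intro g h
  by_cases hg1 : g = 1
  · subst hg1
    rw [one_mul]
    have := Real.sqrt_nonneg (ψ (1 : G))
    linarith
  by_cases hh1 : h = 1
  · subst hh1
    rw [mul_one]
    have := Real.sqrt_nonneg (ψ (1 : G))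
    linarith
  by_cases hgh1 : g * h = 1
  · rw [hgh1, h1, Real.sqrt_zero]
    positivity
  -- distinctness
  have d1 : (1 : G) ≠ g * h := fun e => hgh1 e.symm
  have d2 : (1 : G) ≠ g := fun e => hg1 e.symm
  have d3 : g * h ≠ g := fun e => hh1 (by
    have := mul_left_cancel (a := g) (b := h) (c := 1) (by rw [mul_one]; exact e)
    exact this)
  set α := ψ g with hα
  set β := ψ h with hβ
  set γ := ψ (g * h) with hγ
  have key : ∀ c : ℝ, 2*c*γ - 2*(1+c)*α - 2*c*(1+c)*β ≤ 0 := by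
    intro c
    set a : G → ℂ := fun x => if x = 1 then 1 else if x = g * h then (c : ℂ)
      else if x = g then -(1+c) else 0 with ha
    have v1 : a 1 = 1 := by rw [ha]; simp
    have d3' : ¬ g = g * h := fun e => d3 e.symm
    have v2 : a (g * h) = (c : ℂ) := by rw [ha]; simp [hgh1]
    have v3 : a g = -(1 + (c:ℂ)) := by rw [ha]; simp [hg1, d3']
    have hexp : ∀ f : G → ℂ, ∑ x ∈ ({1, g * h, g} : Finset G), f x
        = f 1 + (f (g * h) + f g) := by
      intro f
      rw [Finset.sum_insert (by
        simp only [Finset.mem_insert, Finset.mem_singleton, not_or]; exact ⟨d1, d2⟩),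
        Finset.sum_insert (by simp only [Finset.mem_singleton]; exact d3),
        Finset.sum_singleton]
    have hs : (∑ x ∈ ({1, g * h, g} : Finset G), a x) = 0 := by
      rw [hexp, v1, v2, v3]; ring
    have hle := hcn {1, g * h, g} a hs
    have e1 : ψ ((1:G)⁻¹ * 1) = 0 := by simpa using h1
    have e2 : ψ ((1:G)⁻¹ * (g * h)) = γ := by rw [inv_one, one_mul]
    have e3 : ψ ((1:G)⁻¹ * g) = α := by rw [inv_one, one_mul]
    have e4 : ψ ((g*h)⁻¹ * 1) = γ := by rw [mul_one, ← hsymm]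
    have e5 : ψ ((g*h)⁻¹ * (g*h)) = 0 := by rw [inv_mul_cancel]; exact h1
    have e6 : ψ ((g*h)⁻¹ * g) = β := by
      rw [mul_inv_rev, mul_assoc, inv_mul_cancel, mul_one, ← hsymm]
    have e7 : ψ (g⁻¹ * 1) = α := by rw [mul_one, ← hsymm]
    have e8 : ψ (g⁻¹ * (g * h)) = β := by rw [inv_mul_cancel_left]
    have e9 : ψ (g⁻¹ * g) = 0 := by rw [inv_mul_cancel]; exact h1
    have hval : (∑ x ∈ ({1, g * h, g} : Finset G), ∑ y ∈ ({1, g * h, g} : Finset G),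
        (starRingEnd ℂ) (a x) * a y * (ψ (x⁻¹ * y) : ℂ))
        = ((2*c*γ - 2*(1+c)*α - 2*c*(1+c)*β : ℝ) : ℂ) := by
      simp only [hexp, v1, v2, v3, e1, e2, e3, e4, e5, e6, e7, e8, e9,
        map_one, map_neg, map_add, Complex.conj_ofReal]
      push_cast
      ring
    rw [hval] at hle
    exact_mod_cast hle
  -- now the real analysis
  have hα0 : 0 ≤ α := hnonneg g
  have hβ0 : 0 ≤ β := hnonneg h
  have hγ0 : 0 ≤ γ := hnonneg (g * h)
  have goal2 : γ ≤ (Real.sqrt α + Real.sqrt β)^2 := by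
    have sa := Real.sq_sqrt hα0
    have sb := Real.sq_sqrt hβ0
    have sa0 := Real.sqrt_nonneg α
    have sb0 := Real.sqrt_nonneg β
    rcases eq_or_lt_of_le hβ0 with hb | hb
    · -- β = 0, show γ ≤ α
      have hβz : β = 0 := hb.symm
      have hγα : γ ≤ α := by
        by_contra hc
        push_neg at hc
        have := key ((α + 1) / (γ - α))
        rw [hβz] at this
        have hd : γ - α > 0 := by linarith
        have : ((α+1)/(γ-α)) * (γ - α) = α + 1 := div_mul_cancel₀ _ (ne_of_gt hd)
        nlinarith [key ((α + 1) / (γ - α)), this]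
      calc γ ≤ α := hγα
        _ ≤ (Real.sqrt α + Real.sqrt β)^2 := by nlinarith
    · -- β > 0
      have hb' : (2*β) ≠ 0 := by positivity
      obtain ⟨c, hcc⟩ : ∃ c : ℝ, 2*β*c = γ - α - β :=
        ⟨(γ - α - β) / (2*β), by rw [mul_comm]; exact div_mul_cancel₀ _ hb'⟩
      have hk := key c
      have hk2 : (2*c*γ - 2*(1+c)*α - 2*c*(1+c)*β) * (2*β) ≤ 0 :=
        mul_nonpos_of_nonpos_of_nonneg hk (by positivity)
      have p1 : (2*β*c)*γ = (γ-α-β)*γ := by rw [hcc]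
      have p2 : (2*β*c)*α = (γ-α-β)*α := by rw [hcc]
      have p3 : (2*β*c)*β = (γ-α-β)*β := by rw [hcc]
      have p4 : (2*β*c)*(2*β*c) = (γ-α-β)*(γ-α-β) := by rw [hcc]
      have hd : (γ - α - β)^2 ≤ 4*α*β := by nlinarith [hk2, p1, p2, p3, p4]
      -- γ - α - β ≤ 2 √α √β
      have hab : Real.sqrt α * Real.sqrt β ≥ 0 := by positivity
      have h4 : 4*α*β = (2 * (Real.sqrt α * Real.sqrt β))^2 := by
        rw [mul_pow]; nlinarith
      have hdle : γ - α - β ≤ 2 * (Real.sqrt α * Real.sqrt β) := by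
        by_contra hcon
        push_neg at hcon
        nlinarith [hd, hab, hcon]
      have hexpand : (Real.sqrt α + Real.sqrt β)^2
          = Real.sqrt α^2 + 2*(Real.sqrt α * Real.sqrt β) + Real.sqrt β^2 := by ring
      rw [hexpand, sa, sb]
      linarith
  calc Real.sqrt γ ≤ Real.sqrt ((Real.sqrt α + Real.sqrt β)^2) := Real.sqrt_le_sqrt goal2
    _ = Real.sqrt α + Real.sqrt β := Real.sqrt_sq (by positivity)
end

section
/- For nonnegative reals a_k and bounded operators b_k, c_k on a Hilbert space H (finite index set), one has ‖∑_k a_k c_k* b_k‖ ≤ ‖∑_k a_k c_k* c_k‖^{1/2} · ‖∑_k a_k b_k* b_k‖^{1/2}. -/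
/-!
Tested against unit vectors `x`, `y`, the operator `T = ∑ₖ aₖ cₖ* bₖ` gives
`re ⟪T x, y⟫ = ∑ₖ aₖ re ⟪bₖ x, cₖ y⟫ ≤ ∑ₖ aₖ ‖bₖ x‖ ‖cₖ y‖`, and the weighted Cauchy–Schwarz
inequality bounds this by `√(∑ₖ aₖ ‖cₖ y‖²) √(∑ₖ aₖ ‖bₖ x‖²)`. Each factor is a
quadratic form `re ⟪S x, x⟫` of `S = ∑ₖ aₖ dₖ* dₖ`, hence at most `‖S‖`.
-/

open ContinuousLinearMap RCLike Finset

theorem Real.sum_mul_mul_le_sqrt_mul_sqrt {ι : Type*} (s : Finset ι) {w : ι → ℝ}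
    (hw : ∀ i ∈ s, 0 ≤ w i) (f g : ι → ℝ) :
    ∑ i ∈ s, w i * (f i * g i) ≤
      √(∑ i ∈ s, w i * f i ^ 2) * √(∑ i ∈ s, w i * g i ^ 2) := by
  have hf : ∀ i ∈ s, 0 ≤ w i * f i ^ 2 := fun i hi ↦ mul_nonneg (hw i hi) (sq_nonneg _)
  have hg : ∀ i ∈ s, 0 ≤ w i * g i ^ 2 := fun i hi ↦ mul_nonneg (hw i hi) (sq_nonneg _)
  refine (Real.le_sqrt_of_sq_le <| sum_sq_le_sum_mul_sum_of_sq_le_mul s hf hg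
    fun i _ ↦ le_of_eq (by ring)).trans_eq (Real.sqrt_mul (sum_nonneg hf) _)

section WeightedSum

variable {E F ι : Type*}
  [NormedAddCommGroup E] [InnerProductSpace ℂ E] [CompleteSpace E]
  [NormedAddCommGroup F] [InnerProductSpace ℂ F] [CompleteSpace F]
  (s : Finset ι) (a : ι → ℝ)

theorem re_inner_sum_smul_adjoint_comp_apply (b c : ι → E →L[ℂ] F) (x y : E) :
    re (inner ℂ ((∑ k ∈ s, a k • (adjoint (c k) ∘L b k)) x) y) =
      ∑ k ∈ s, a k * re (inner ℂ (b k x) (c k y)) := by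
  simp only [_root_.sum_apply, sum_inner, map_sum, smul_apply, comp_apply,
    real_smul_eq_coe_smul (K := ℂ), inner_smul_left, conj_ofReal, re_ofReal_mul, adjoint_inner_left]

theorem sum_mul_norm_sq_le_norm_mul_sq (d : ι → E →L[ℂ] F) (x : E) :
    ∑ k ∈ s, a k * ‖d k x‖ ^ 2 ≤ ‖∑ k ∈ s, a k • (adjoint (d k) ∘L d k)‖ * ‖x‖ ^ 2 := by
  set S := ∑ k ∈ s, a k • (adjoint (d k) ∘L d k)
  calc ∑ k ∈ s, a k * ‖d k x‖ ^ 2 = re (inner ℂ (S x) x) := by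
        simp only [S, re_inner_sum_smul_adjoint_comp_apply, inner_self_eq_norm_sq]
    _ ≤ ‖S x‖ * ‖x‖ := re_inner_le_norm _ _
    _ ≤ ‖S‖ * ‖x‖ * ‖x‖ := by gcongr; exact le_opNorm _ _
    _ = ‖S‖ * ‖x‖ ^ 2 := by ring

end WeightedSum

theorem cauchy_schwarz_operator {H : Type*} [NormedAddCommGroup H]
    [InnerProductSpace ℂ H] [CompleteSpace H]
    {ι : Type*} (s : Finset ι) (a : ι → ℝ) (ha : ∀ k, 0 ≤ a k)
    (b c : ι → H →L[ℂ] H) :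
    ‖∑ k ∈ s, a k • (ContinuousLinearMap.adjoint (c k) ∘L b k)‖ ≤
      Real.sqrt ‖∑ k ∈ s, a k • (ContinuousLinearMap.adjoint (c k) ∘L c k)‖ *
      Real.sqrt ‖∑ k ∈ s, a k • (ContinuousLinearMap.adjoint (b k) ∘L b k)‖ := by
  refine opNorm_le_of_re_inner_le (by positivity) fun x y hx hy ↦ ?_
  calc re (inner ℂ ((∑ k ∈ s, a k • (adjoint (c k) ∘L b k)) x) y)
      = ∑ k ∈ s, a k * re (inner ℂ (b k x) (c k y)) :=
        re_inner_sum_smul_adjoint_comp_apply s a b c x y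
    _ ≤ ∑ k ∈ s, a k * (‖c k y‖ * ‖b k x‖) := by
        gcongr with k
        · exact ha k
        · rw [mul_comm]; exact re_inner_le_norm _ _
    _ ≤ √(∑ k ∈ s, a k * ‖c k y‖ ^ 2) * √(∑ k ∈ s, a k * ‖b k x‖ ^ 2) :=
        Real.sum_mul_mul_le_sqrt_mul_sqrt s (fun k _ ↦ ha k) _ _
    _ ≤ _ := by
        gcongr
        · simpa [hy] using sum_mul_norm_sq_le_norm_mul_sq s a c y
        · simpa [hx] using sum_mul_norm_sq_le_norm_mul_sq s a b x
end

section
/- Let δ > 0 and let (s_k)_{k∈ℕ} be a sequence of nonnegative reals with s_{k+1} ≥ (1+δ) s_k for all k and s_0 > 0. Then for every t > 0, ∑_{k : t s_k ≤ 1} t s_k + ∑_{k : t s_k > 1} exp(−t δ s_k) ≤ 1 + δ^{-1} + 1/(1 − exp(−δ²)). -/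
/-!
Put `a k = t s_k`, so that `(1 + δ) a_k ≤ a_{k+1}`, and let `m` be the first index with `a_m > 1`.
The terms below `m` grow geometrically, so their sum is at most `(1 + δ⁻¹) a_{m-1} ≤ 1 + δ⁻¹`.
From `m` on, `a_{m+j} ≥ 1 + jδ`, hence `exp (-δ a_{m+j}) ≤ exp (-δ²) ^ j`, and the second sum is
dominated by a geometric series of ratio `exp (-δ²)`.
-/

open Real Finset

theorem Monotone.exists_le_iff_lt {α : Type*} [LinearOrder α] {a : ℕ → α} (ha : Monotone a)
    {c : α} (hc : ∃ k, c < a k) : ∃ m, ∀ k, a k ≤ c ↔ k < m := by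
  classical
  refine ⟨Nat.find hc, fun k => ⟨fun hk => ?_, fun hk => not_lt.mp (Nat.find_min hc hk)⟩⟩
  by_contra! hmk
  exact (Nat.find_spec hc).not_ge ((ha hmk).trans hk)

theorem tsum_le_of_eq_zero_of_le_geometric {g : ℕ → ℝ} {r : ℝ} {m : ℕ} (hg : ∀ k, 0 ≤ g k)
    (hzero : ∀ k < m, g k = 0) (hr0 : 0 ≤ r) (hr1 : r < 1) (hle : ∀ j, g (j + m) ≤ r ^ j) :
    ∑' k, g k ≤ (1 - r)⁻¹ := by
  have hgeom := summable_geometric_of_lt_one hr0 hr1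
  have hshift : Summable fun j => g (j + m) := hgeom.of_nonneg_of_le (fun j => hg _) hle
  rw [← ((summable_nat_add_iff m).mp hshift).sum_add_tsum_nat_add m,
    sum_eq_zero fun k hk => hzero k (mem_range.mp hk), zero_add,
    ← tsum_geometric_of_lt_one hr0 hr1]
  exact hshift.tsum_le_tsum hle hgeom

section Lacunary

variable {δ : ℝ} {a : ℕ → ℝ}

theorem lacunary_mul_one_add_le (hδ : 0 ≤ δ) (ha : ∀ k, (1 + δ) * a k ≤ a (k + 1)) {m : ℕ}
    (hm : 0 ≤ a m) (j : ℕ) : a m * (1 + j * δ) ≤ a (m + j) := by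
  induction j with
  | zero => simp
  | succ j ih =>
    have hδ2 : 0 ≤ a m * (j * δ ^ 2) := by positivity
    calc a m * (1 + (j + 1 : ℕ) * δ) ≤ (1 + δ) * (a m * (1 + j * δ)) := by
          push_cast; nlinarith
      _ ≤ (1 + δ) * a (m + j) := by gcongr
      _ ≤ a (m + (j + 1)) := ha _

theorem lacunary_pos (hδ : 0 ≤ δ) (ha : ∀ k, (1 + δ) * a k ≤ a (k + 1)) (h0 : 0 < a 0)
    (k : ℕ) : 0 < a k := by
  have hk := lacunary_mul_one_add_le hδ ha h0.le k
  rw [zero_add] at hk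
  exact (mul_pos h0 (by positivity)).trans_le hk

theorem lacunary_monotone (hδ : 0 ≤ δ) (ha : ∀ k, (1 + δ) * a k ≤ a (k + 1)) (h0 : 0 < a 0) :
    Monotone a :=
  monotone_nat_of_le_succ fun k => by nlinarith [ha k, lacunary_pos hδ ha h0 k]

theorem lacunary_exists_gt (hδ : 0 < δ) (ha : ∀ k, (1 + δ) * a k ≤ a (k + 1)) (h0 : 0 < a 0)
    (c : ℝ) : ∃ k, c < a k := by
  obtain ⟨k, hk⟩ := exists_nat_gt (c / (a 0 * δ))
  rw [div_lt_iff₀ (by positivity)] at hk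
  refine ⟨k, ?_⟩
  calc c < a 0 * (1 + k * δ) := by nlinarith
    _ ≤ a (0 + k) := lacunary_mul_one_add_le hδ.le ha h0.le k
    _ = a k := by rw [zero_add]

theorem lacunary_exists_le_one_iff (hδ : 0 < δ) (ha : ∀ k, (1 + δ) * a k ≤ a (k + 1))
    (h0 : 0 < a 0) : ∃ m, ∀ k, a k ≤ 1 ↔ k < m :=
  (lacunary_monotone hδ.le ha h0).exists_le_iff_lt (lacunary_exists_gt hδ ha h0 1)

theorem lacunary_sum_range_succ_le (hδ : 0 < δ) (ha : ∀ k, (1 + δ) * a k ≤ a (k + 1))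
    (h0 : 0 ≤ a 0) (n : ℕ) : ∑ k ∈ range (n + 1), a k ≤ (1 + δ⁻¹) * a n := by
  induction n with
  | zero =>
    rw [sum_range_one]
    nlinarith [mul_nonneg (inv_pos.mpr hδ).le h0]
  | succ n ih =>
    have hrw : (1 + δ⁻¹) * a n = δ⁻¹ * ((1 + δ) * a n) := by field_simp; ring
    calc ∑ k ∈ range (n + 1 + 1), a k ≤ (1 + δ⁻¹) * a n + a (n + 1) := by
          rw [sum_range_succ]; linarith
      _ ≤ δ⁻¹ * a (n + 1) + a (n + 1) := by rw [hrw]; gcongr; exact ha n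
      _ = (1 + δ⁻¹) * a (n + 1) := by ring

theorem lacunary_tsum_le_one_add_inv (hδ : 0 < δ) (ha : ∀ k, (1 + δ) * a k ≤ a (k + 1))
    (h0 : 0 < a 0) : ∑' k, (if a k ≤ 1 then a k else 0) ≤ 1 + δ⁻¹ := by
  obtain ⟨m, hm⟩ := lacunary_exists_le_one_iff hδ ha h0
  rw [tsum_eq_sum (s := range m) fun k hk => if_neg (by rwa [hm, ← mem_range]),
    sum_congr rfl fun k hk => if_pos ((hm k).mpr (mem_range.mp hk))]
  cases m with
  | zero => rw [sum_range_zero]; positivity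
  | succ n =>
    calc ∑ k ∈ range (n + 1), a k ≤ (1 + δ⁻¹) * a n := lacunary_sum_range_succ_le hδ ha h0.le n
      _ ≤ 1 + δ⁻¹ := mul_le_of_le_one_right (by positivity) ((hm n).mpr n.lt_succ_self)

theorem lacunary_tsum_exp_le (hδ : 0 < δ) (ha : ∀ k, (1 + δ) * a k ≤ a (k + 1))
    (h0 : 0 < a 0) :
    ∑' k, (if 1 < a k then exp (-(δ * a k)) else 0) ≤ (1 - exp (-δ ^ 2))⁻¹ := by
  obtain ⟨m, hm⟩ := lacunary_exists_le_one_iff hδ ha h0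
  have ham : 1 < a m := not_le.mp fun h => lt_irrefl m ((hm m).mp h)
  refine tsum_le_of_eq_zero_of_le_geometric (m := m) (fun k => by split_ifs <;> positivity)
    (fun k hk => if_neg (not_lt.mpr ((hm k).mpr hk))) (exp_pos _).le
    (exp_lt_one_iff.mpr (by nlinarith)) fun j => ?_
  have hgrow : 1 + j * δ < a (j + m) := by
    rw [add_comm j m]
    exact (lt_mul_of_one_lt_left (by positivity) ham).trans_le
      (lacunary_mul_one_add_le hδ.le ha (by linarith) j)
  rw [if_pos (by nlinarith), ← exp_nat_mul, exp_le_exp]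
  nlinarith [mul_lt_mul_of_pos_left hgrow hδ]

end Lacunary

theorem lacunary_exp_sum_bound (δ : ℝ) (hδ : 0 < δ) (s : ℕ → ℝ)
    (hs0 : 0 < s 0) (hgrow : ∀ k, (1 + δ) * s k ≤ s (k + 1)) :
    ∀ t : ℝ, 0 < t →
      (∑' k : ℕ, if t * s k ≤ 1 then t * s k else 0) +
        (∑' k : ℕ, if 1 < t * s k then Real.exp (-(t * δ * s k)) else 0) ≤
      1 + δ⁻¹ + 1 / (1 - Real.exp (-δ ^ 2)) := by
  intro t ht
  have ha : ∀ k, (1 + δ) * (t * s k) ≤ t * s (k + 1) := fun k => by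
    rw [mul_left_comm]; exact mul_le_mul_of_nonneg_left (hgrow k) ht.le
  have h0 : 0 < t * s 0 := mul_pos ht hs0
  have hexp : ∀ k, t * δ * s k = δ * (t * s k) := fun k => by ring
  simp_rw [hexp, one_div]
  exact add_le_add (lacunary_tsum_le_one_add_inv hδ ha h0) (lacunary_tsum_exp_le hδ ha h0)
end

section
/- Let δ > 0 and (s_k) be positive reals with s_{k+1} ≥ (1+δ)s_k. Define for t > 0 and indices k, j the quantity a_{k,j} = exp(−t d_{k,j}) (1 − exp(−t s_k)) (1 − exp(−t s_j)), where d_{k,j} ≥ δ·max(s_k, s_j) for k ≠ j and d_{k,k} ≥ 0. Then sup_j ∑_k a_{k,j} ≤ c_δ for a constant c_δ depending only on δ (one may take c_δ = 1 + δ^{-1} + 1/(1 − e^{−δ²}) + 1). -/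
/-!
Fix the column `j` and put `x k = t * s k`, a sequence growing at least geometrically with
ratio `1 + δ`. Off the diagonal, `a k j ≤ min (x k) (exp (-(δ * x k)))`: the factor
`1 - exp (-(t * s k))` is at most `x k`, and `exp (-(t * d k j)) ≤ exp (-(δ * x k))` by separation.
Splitting at the first `n` with `1 < x n`, the terms before `n` are dominated by the geometric
series `(1 + δ)⁻¹ ^ (n - 1 - k)`, and from `n` on, Bernoulli's inequality `x (n + m) ≥ 1 + m δ`
dominates them by `exp (-δ ^ 2) ^ m`. The diagonal term contributes at most `1`.
-/

open Finset Real

lemma pow_mul_le_of_mul_le_succ {c : ℝ} {x : ℕ → ℝ} (hc : 0 ≤ c)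
    (h : ∀ k, c * x k ≤ x (k + 1)) (k m : ℕ) : c ^ m * x k ≤ x (k + m) := by
  induction m with
  | zero => simp
  | succ m ih =>
    calc c ^ (m + 1) * x k = c * (c ^ m * x k) := by ring
      _ ≤ c * x (k + m) := mul_le_mul_of_nonneg_left ih hc
      _ ≤ x (k + (m + 1)) := h (k + m)

lemma one_sub_exp_neg_le_one (x : ℝ) : 1 - exp (-x) ≤ 1 := by
  linarith [exp_pos (-x)]

lemma one_sub_exp_neg_nonneg {x : ℝ} (hx : 0 ≤ x) : 0 ≤ 1 - exp (-x) := by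
  linarith [exp_le_one_iff.mpr (neg_nonpos.mpr hx)]

lemma one_sub_exp_neg_le_self (x : ℝ) : 1 - exp (-x) ≤ x := by
  linarith [one_sub_le_exp_neg x]

lemma exp_neg_mul_one_sub_exp_neg_mul_nonneg (a : ℝ) {b c : ℝ} (hb : 0 ≤ b) (hc : 0 ≤ c) :
    0 ≤ exp (-a) * (1 - exp (-b)) * (1 - exp (-c)) :=
  mul_nonneg (mul_nonneg (exp_pos _).le (one_sub_exp_neg_nonneg hb)) (one_sub_exp_neg_nonneg hc)

lemma exp_neg_mul_one_sub_exp_neg_mul_le_one {a b c : ℝ} (ha : 0 ≤ a) (hb : 0 ≤ b) (hc : 0 ≤ c) :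
    exp (-a) * (1 - exp (-b)) * (1 - exp (-c)) ≤ 1 :=
  mul_le_one₀ (mul_le_one₀ (exp_le_one_iff.mpr (neg_nonpos.mpr ha)) (one_sub_exp_neg_nonneg hb)
    (one_sub_exp_neg_le_one b)) (one_sub_exp_neg_nonneg hc) (one_sub_exp_neg_le_one c)

lemma exp_neg_mul_one_sub_exp_neg_mul_le_min {δ a b : ℝ} (c : ℝ) (hδ : 0 ≤ δ) (hb : 0 ≤ b)
    (hab : δ * b ≤ a) :
    exp (-a) * (1 - exp (-b)) * (1 - exp (-c)) ≤ min b (exp (-(δ * b))) := by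
  have hexp : exp (-a) ≤ exp (-(δ * b)) := exp_le_exp.mpr (neg_le_neg hab)
  have hexp_le_one : exp (-a) ≤ 1 := exp_le_one_iff.mpr (by nlinarith)
  have hf := one_sub_exp_neg_nonneg hb
  have hdrop : exp (-a) * (1 - exp (-b)) * (1 - exp (-c)) ≤ exp (-a) * (1 - exp (-b)) :=
    mul_le_of_le_one_right (by positivity) (one_sub_exp_neg_le_one c)
  refine le_min (hdrop.trans ?_) (hdrop.trans ?_)
  · exact (mul_le_of_le_one_left hf hexp_le_one).trans (one_sub_exp_neg_le_self b)
  · exact (mul_le_of_le_one_right (exp_pos _).le (one_sub_exp_neg_le_one b)).trans hexp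

section GeometricGrowth

variable {δ : ℝ} {x : ℕ → ℝ}

lemma le_inv_pow_of_le_one (hδ : 0 < δ) (hgrow : ∀ k, (1 + δ) * x k ≤ x (k + 1)) {k l : ℕ}
    (hkl : k ≤ l) (hl : x l ≤ 1) :
    x k ≤ (1 + δ)⁻¹ ^ (l - k) := by
  have hpow : 0 < (1 + δ) ^ (l - k) := by positivity
  have hmul : (1 + δ) ^ (l - k) * x k ≤ 1 := by
    calc (1 + δ) ^ (l - k) * x k ≤ x (k + (l - k)) :=
          pow_mul_le_of_mul_le_succ (by linarith) hgrow k (l - k)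
      _ = x l := by rw [Nat.add_sub_cancel' hkl]
      _ ≤ 1 := hl
  rw [inv_pow, ← one_div, le_div_iff₀ hpow, mul_comm]
  exact hmul

lemma exp_neg_mul_le_pow_of_one_le (hδ : 0 < δ) (hgrow : ∀ k, (1 + δ) * x k ≤ x (k + 1))
    {n : ℕ} (hn : 1 ≤ x n) (m : ℕ) :
    exp (-(δ * x (n + m))) ≤ exp (-δ ^ 2) ^ m := by
  have hbernoulli : 1 + m * δ ≤ (1 + δ) ^ m := one_add_mul_le_pow (by linarith) m
  have hlow : 1 + m * δ ≤ x (n + m) := by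
    have := pow_mul_le_of_mul_le_succ (by linarith) hgrow n m
    nlinarith [pow_pos (by linarith : 0 < 1 + δ) m]
  rw [← exp_nat_mul, exp_le_exp]
  nlinarith

lemma exists_one_lt_of_mul_le_succ (hδ : 0 < δ) (hgrow : ∀ k, (1 + δ) * x k ≤ x (k + 1))
    (hx0 : 0 < x 0) : ∃ n, 1 < x n := by
  obtain ⟨n, hn⟩ := pow_unbounded_of_one_lt (x 0)⁻¹ (by linarith : (1 : ℝ) < 1 + δ)
  refine ⟨n, ?_⟩
  calc 1 < (1 + δ) ^ n * x 0 := by rwa [inv_lt_iff_one_lt_mul₀ hx0] at hn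
    _ ≤ x (0 + n) := pow_mul_le_of_mul_le_succ (by linarith) hgrow 0 n
    _ = x n := by rw [zero_add]

lemma summable_min_exp_neg_mul (hδ : 0 < δ) (hx : ∀ k, 0 < x k)
    (hgrow : ∀ k, (1 + δ) * x k ≤ x (k + 1)) :
    Summable fun k => min (x k) (exp (-(δ * x k))) := by
  obtain ⟨n, hn⟩ := exists_one_lt_of_mul_le_succ hδ hgrow (hx 0)
  refine (summable_nat_add_iff n).1 (Summable.of_nonneg_of_le (fun m => ?_) (fun m => ?_)
    (summable_geometric_of_lt_one (exp_pos _).le (exp_lt_one_iff.mpr (by nlinarith : -δ ^ 2 < 0))))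
  · exact le_min (hx _).le (exp_pos _).le
  · rw [add_comm]
    exact (min_le_right _ _).trans (exp_neg_mul_le_pow_of_one_le hδ hgrow hn.le m)

lemma tsum_min_exp_neg_mul_le (hδ : 0 < δ) (hx : ∀ k, 0 < x k)
    (hgrow : ∀ k, (1 + δ) * x k ≤ x (k + 1)) :
    ∑' k, min (x k) (exp (-(δ * x k))) ≤ 1 + δ⁻¹ + (1 - exp (-δ ^ 2))⁻¹ := by
  have hex := exists_one_lt_of_mul_le_succ hδ hgrow (hx 0)
  set n := Nat.find hex
  have hsum := summable_min_exp_neg_mul hδ hx hgrow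
  have hq : exp (-δ ^ 2) < 1 := exp_lt_one_iff.mpr (by nlinarith)
  have hr : (1 + δ)⁻¹ < 1 := inv_lt_one_of_one_lt₀ (by linarith)
  have head : ∑ k ∈ range n, min (x k) (exp (-(δ * x k))) ≤ 1 + δ⁻¹ := by
    calc ∑ k ∈ range n, min (x k) (exp (-(δ * x k)))
        ≤ ∑ k ∈ range n, (1 + δ)⁻¹ ^ (n - 1 - k) := by
          refine sum_le_sum fun k hk => (min_le_left _ _).trans ?_
          have hkn := mem_range.mp hk
          exact le_inv_pow_of_le_one hδ hgrow (by omega)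
            (not_lt.mp (Nat.find_min hex (by omega : n - 1 < n)))
      _ = ∑ k ∈ range n, (1 + δ)⁻¹ ^ k := sum_range_reflect _ n
      _ ≤ (1 + δ)⁻¹ ^ 0 / (1 - (1 + δ)⁻¹) := by
          rw [range_eq_Ico]
          exact geom_sum_Ico_le_of_lt_one (by positivity) hr
      _ = 1 + δ⁻¹ := by
          have hsub : 1 - (1 + δ)⁻¹ = δ / (1 + δ) := by field_simp; ring
          rw [pow_zero, hsub, one_div_div, add_div, div_self hδ.ne', one_div, add_comm]
  have tail : ∑' m, min (x (m + n)) (exp (-(δ * x (m + n)))) ≤ (1 - exp (-δ ^ 2))⁻¹ := by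
    rw [← tsum_geometric_of_lt_one (exp_pos _).le hq]
    refine Summable.tsum_le_tsum (fun m => ?_) ((summable_nat_add_iff n).2 hsum)
      (summable_geometric_of_lt_one (exp_pos _).le hq)
    rw [add_comm]
    exact (min_le_right _ _).trans (exp_neg_mul_le_pow_of_one_le hδ hgrow (Nat.find_spec hex).le m)
  rw [← hsum.sum_add_tsum_nat_add n]
  linarith

end GeometricGrowth

lemma tsum_le_one_add_tsum_of_le_ite_add {f φ : ℕ → ℝ} {j : ℕ} (hf : ∀ k, 0 ≤ f k)
    (hφ : Summable φ) (hle : ∀ k, f k ≤ (if k = j then 1 else 0) + φ k) :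
    ∑' k, f k ≤ 1 + ∑' k, φ k := by
  have hsum := (hasSum_ite_eq j (1 : ℝ)).summable.add hφ
  calc ∑' k, f k ≤ ∑' k, ((if k = j then 1 else 0) + φ k) :=
        (Summable.of_nonneg_of_le hf hle hsum).tsum_le_tsum hle hsum
    _ = 1 + ∑' k, φ k := by rw [(hasSum_ite_eq j 1).summable.tsum_add hφ, tsum_ite_eq]

theorem schur_row_sum_bound (δ : ℝ) (hδ : 0 < δ) (s : ℕ → ℝ)
    (hs0 : ∀ k, 0 < s k) (hgrow : ∀ k, (1 + δ) * s k ≤ s (k + 1))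
    (d : ℕ → ℕ → ℝ) (hd0 : ∀ k j, 0 ≤ d k j)
    (hdsep : ∀ k j, k ≠ j → δ * max (s k) (s j) ≤ d k j)
    (t : ℝ) (ht : 0 < t)
    (a : ℕ → ℕ → ℝ)
    (ha : ∀ k j, a k j =
      Real.exp (-(t * d k j)) * (1 - Real.exp (-(t * s k))) * (1 - Real.exp (-(t * s j)))) :
    ∀ j : ℕ, (∑' k : ℕ, a k j) ≤ 1 + δ⁻¹ + 1 / (1 - Real.exp (-δ ^ 2)) + 1 := by
  intro j
  set x : ℕ → ℝ := fun k => t * s k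
  have hx : ∀ k, 0 < x k := fun k => mul_pos ht (hs0 k)
  have hxgrow : ∀ k, (1 + δ) * x k ≤ x (k + 1) := fun k => by
    simpa only [x, mul_left_comm] using mul_le_mul_of_nonneg_left (hgrow k) ht.le
  set φ : ℕ → ℝ := fun k => min (x k) (exp (-(δ * x k)))
  have hφ : Summable φ := summable_min_exp_neg_mul hδ hx hxgrow
  have hbound : ∀ k, a k j ≤ (if k = j then 1 else 0) + φ k := by
    intro k
    rw [ha]
    by_cases hkj : k = j
    · subst hkj
      have hφk : 0 ≤ φ k := le_min (hx k).le (exp_pos _).le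
      rw [if_pos rfl]
      linarith [exp_neg_mul_one_sub_exp_neg_mul_le_one (mul_nonneg ht.le (hd0 k k))
        (hx k).le (hx k).le]
    · have hsep : δ * x k ≤ t * d k j := by
        have hsk : δ * s k ≤ d k j :=
          (mul_le_mul_of_nonneg_left (le_max_left _ _) hδ.le).trans (hdsep k j hkj)
        simpa only [x, mul_left_comm] using mul_le_mul_of_nonneg_left hsk ht.le
      rw [if_neg hkj, zero_add]
      exact exp_neg_mul_one_sub_exp_neg_mul_le_min _ hδ.le (hx k).le hsep
  have hnonneg : ∀ k, 0 ≤ a k j := fun k => (ha k j).symm ▸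
    exp_neg_mul_one_sub_exp_neg_mul_nonneg _ (hx k).le (hx j).le
  rw [one_div]
  linarith [tsum_le_one_add_tsum_of_le_ite_add hnonneg hφ hbound,
    tsum_min_exp_neg_mul_le hδ hx hxgrow]
end

section
/- Let A = (a_{k,j}) be an infinite matrix of nonnegative reals with sup_j ∑_k a_{k,j} ≤ C and sup_k ∑_j a_{k,j} ≤ C. Then for bounded operators c_k on a Hilbert space, ‖∑_{k,j} a_{k,j} c_k* c_j‖ ≤ C ‖∑_k c_k* c_k‖ (sums over a finite index set), i.e. the Schur-test bound holds for operator coefficients. -/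
/-!
With `S = ∑ₖ (c k)† ∘ c k` and `T = ∑ₖⱼ a k j (c k)† ∘ c j`, one has
`∑ₖ ‖c k x‖² = re ⟪S x, x⟫ ≤ ‖S‖ ‖x‖²`, so it suffices to bound `re ⟪T x, y⟫` for unit vectors.
Expanding, `re ⟪T x, y⟫ ≤ ∑ₖⱼ a k j ‖c k y‖ ‖c j x‖`, and the scalar Schur test (`2uv ≤ u² + v²`,
then sum along the rows and columns of `a`) bounds this by
`C (∑ₖ ‖c k y‖² + ∑ⱼ ‖c j x‖²) / 2 ≤ C ‖S‖`.
-/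

open ContinuousLinearMap RCLike

theorem schur_test_bilinear {ι : Type*} (s : Finset ι) {a : ι → ι → ℝ} {C : ℝ}
    (ha : ∀ k j, 0 ≤ a k j) (hrow : ∀ j, (∑ k ∈ s, a k j) ≤ C) (hcol : ∀ k, (∑ j ∈ s, a k j) ≤ C)
    (u v : ι → ℝ) :
    ∑ k ∈ s, ∑ j ∈ s, a k j * (u k * v j) ≤ C * (∑ k ∈ s, u k ^ 2 + ∑ j ∈ s, v j ^ 2) / 2 :=
  calc ∑ k ∈ s, ∑ j ∈ s, a k j * (u k * v j)
      ≤ ∑ k ∈ s, ∑ j ∈ s, a k j * ((u k ^ 2 + v j ^ 2) / 2) := by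
        gcongr with k _ j _
        · exact ha k j
        · linarith [two_mul_le_add_sq (u k) (v j)]
    _ = ((∑ k ∈ s, (∑ j ∈ s, a k j) * u k ^ 2) + ∑ j ∈ s, (∑ k ∈ s, a k j) * v j ^ 2) / 2 := by
        simp only [Finset.sum_mul]
        rw [Finset.sum_comm (f := fun j k => a k j * v j ^ 2)]
        simp only [← Finset.sum_add_distrib, Finset.sum_div]
        exact Finset.sum_congr rfl fun k _ => Finset.sum_congr rfl fun j _ => by ring
    _ ≤ (∑ k ∈ s, C * u k ^ 2 + ∑ j ∈ s, C * v j ^ 2) / 2 := by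
        gcongr with k _ j _
        · exact hcol k
        · exact hrow j
    _ = C * (∑ k ∈ s, u k ^ 2 + ∑ j ∈ s, v j ^ 2) / 2 := by
        rw [← Finset.mul_sum, ← Finset.mul_sum]; ring

theorem sum_norm_apply_sq_le {𝕜 : Type*} [RCLike 𝕜] {H : Type*} [NormedAddCommGroup H]
    [InnerProductSpace 𝕜 H] [CompleteSpace H] {ι : Type*} (s : Finset ι) (c : ι → H →L[𝕜] H)
    (x : H) :
    ∑ k ∈ s, ‖c k x‖ ^ 2 ≤ ‖∑ k ∈ s, adjoint (c k) ∘L c k‖ * ‖x‖ ^ 2 := by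
  set S := ∑ k ∈ s, adjoint (c k) ∘L c k
  calc ∑ k ∈ s, ‖c k x‖ ^ 2 = re (inner 𝕜 (S x) x) := by
        simp only [S, apply_norm_sq_eq_inner_adjoint_left, sum_apply, sum_inner, map_sum]
    _ ≤ ‖S x‖ * ‖x‖ := re_inner_le_norm _ _
    _ ≤ ‖S‖ * ‖x‖ * ‖x‖ := by gcongr; exact S.le_opNorm x
    _ = ‖S‖ * ‖x‖ ^ 2 := by ring

theorem re_inner_sum_smul_adjoint_comp_le {H : Type*} [NormedAddCommGroup H]
    [InnerProductSpace ℂ H] [CompleteSpace H] {ι : Type*} (s : Finset ι) (c : ι → H →L[ℂ] H)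
    {a : ι → ι → ℝ} (ha : ∀ k j, 0 ≤ a k j) (x y : H) :
    re (inner ℂ ((∑ k ∈ s, ∑ j ∈ s, a k j • (adjoint (c k) ∘L c j)) x) y) ≤
      ∑ k ∈ s, ∑ j ∈ s, a k j * (‖c k y‖ * ‖c j x‖) := by
  simp only [sum_apply, sum_inner, map_sum, smul_apply, comp_apply, real_smul_eq_coe_smul (K := ℂ),
    inner_smul_real_left, adjoint_inner_left, smul_eq_mul, re_ofReal_mul]
  gcongr with k _ j _
  · exact ha k j
  · exact (re_inner_le_norm _ _).trans_eq (mul_comm _ _)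

theorem schur_test_operator_coeffs {H : Type*} [NormedAddCommGroup H]
    [InnerProductSpace ℂ H] [CompleteSpace H]
    {ι : Type*} (s : Finset ι) (a : ι → ι → ℝ) (ha : ∀ k j, 0 ≤ a k j)
    (C : ℝ) (hrow : ∀ j, (∑ k ∈ s, a k j) ≤ C) (hcol : ∀ k, (∑ j ∈ s, a k j) ≤ C)
    (c : ι → H →L[ℂ] H) :
    ‖∑ k ∈ s, ∑ j ∈ s, a k j • (ContinuousLinearMap.adjoint (c k) ∘L c j)‖ ≤
      C * ‖∑ k ∈ s, ContinuousLinearMap.adjoint (c k) ∘L c k‖ := by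
  obtain rfl | ⟨k, -⟩ := s.eq_empty_or_nonempty
  · simp
  have hC : 0 ≤ C := (Finset.sum_nonneg fun j _ => ha k j).trans (hcol k)
  refine opNorm_le_of_re_inner_le (mul_nonneg hC (norm_nonneg _)) fun x y hx hy => ?_
  calc _ ≤ ∑ k ∈ s, ∑ j ∈ s, a k j * (‖c k y‖ * ‖c j x‖) :=
        re_inner_sum_smul_adjoint_comp_le s c ha x y
    _ ≤ C * (∑ k ∈ s, ‖c k y‖ ^ 2 + ∑ j ∈ s, ‖c j x‖ ^ 2) / 2 :=
        schur_test_bilinear s ha hrow hcol _ _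
    _ ≤ C * (‖∑ k ∈ s, adjoint (c k) ∘L c k‖ * ‖y‖ ^ 2 +
          ‖∑ k ∈ s, adjoint (c k) ∘L c k‖ * ‖x‖ ^ 2) / 2 := by
        gcongr <;> exact sum_norm_apply_sq_le s c _
    _ = C * ‖∑ k ∈ s, adjoint (c k) ∘L c k‖ := by rw [hx, hy]; ring
end

section
/- In the free group F_∞ with free generators (g_k)_{k∈ℤ\{0\}} (with convention g_{-k} = g_k^{-1}), the set Q_n of symmetric words of length 2n, Q_n = { g_{k_1} g_{k_2} ⋯ g_{k_n} g_{k_n} ⋯ g_{k_2} g_{k_1} : k_j ∈ ℤ\{0\}, g_{k_j} ≠ g_{k_{j+1}}^{-1} }, is a free subset of F_∞: every nonempty reduced product x_m ⋯ x_2 x_1 with x_j ∈ Q_n ∪ Q_n^{-1} and x_{j+1} ≠ x_j^{-1} is not the identity. -/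
/-!
Every element of `Q_n ∪ Q_n⁻¹` has reduced word `u uᴿ` with `|u| = n`. In a product
`x * y` of two such elements, with halves `u` and `v`, the tail `uᴿ` of `x` cancels against the
head `v` of `y` only partially: complete cancellation would mean `v = (uᴿ)⁻¹`, i.e. `y = x⁻¹`.
By induction from the right, the reduced word of `x₁ ⋯ xₘ` therefore begins with the first half
of `x₁`, so it is nonempty when `n > 0`.
-/

/-- The generators of `F_∞` indexed by nonzero integers, with `g_{-k} = g_k⁻¹`. -/
noncomputable def gen (k : ℤ) : FreeGroup ℕ :=
  if 0 < k then FreeGroup.of k.toNat else (FreeGroup.of (-k).toNat)⁻¹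

/-- The symmetric word `g_{k_1} ⋯ g_{k_n} g_{k_n} ⋯ g_{k_1}`. -/
noncomputable def symmWord {n : ℕ} (k : Fin n → ℤ) : FreeGroup ℕ :=
  (List.ofFn fun j => gen (k j)).prod * ((List.ofFn fun j => gen (k j)).reverse).prod

/-- The set `Q_n` of symmetric words of length `2n`. -/
noncomputable def Qset (n : ℕ) : Set (FreeGroup ℕ) :=
  { w | ∃ k : Fin n → ℤ, (∀ j, k j ≠ 0) ∧
      (∀ (j : ℕ) (h : j + 1 < n),
        gen (k ⟨j + 1, h⟩) ≠ (gen (k ⟨j, by omega⟩))⁻¹) ∧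
      w = symmWord k }

namespace List

theorem exists_append_cons_ne_of_length_eq {β : Type*} :
    ∀ {l₁ l₂ : List β}, l₁.length = l₂.length → l₁ ≠ l₂ →
      ∃ p a b t₁ t₂, a ≠ b ∧ l₁ = p ++ a :: t₁ ∧ l₂ = p ++ b :: t₂
  | [], [], _, hne => absurd rfl hne
  | [], _ :: _, hlen, _ | _ :: _, [], hlen, _ => by simp at hlen
  | a :: t₁, b :: t₂, hlen, hne => by
    by_cases hab : a = b
    · subst hab
      obtain ⟨p, c, d, s₁, s₂, hcd, rfl, rfl⟩ :=
        exists_append_cons_ne_of_length_eq (by simpa using hlen) (by simpa using hne)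
      exact ⟨a :: p, c, d, s₁, s₂, hcd, rfl, rfl⟩
    · exact ⟨[], a, b, t₁, t₂, hab, rfl, rfl⟩

end List

namespace FreeGroup

variable {α : Type*}

theorem IsReduced.append_reverse {L : List (α × Bool)} (h : IsReduced L) :
    IsReduced (L ++ L.reverse) := by
  refine h.append (List.isChain_reverse.mpr (h.imp fun a b hab e => (hab e.symm).symm)) ?_
  intro a ha b hb
  rw [List.head?_reverse, ha, Option.mem_some_iff] at hb
  simp [hb]

theorem invRev_append_reverse (u : List (α × Bool)) :
    invRev (u ++ u.reverse) = invRev u.reverse ++ (invRev u.reverse).reverse := by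
  simp [invRev]

theorem prod_map_mk_singleton (L : List (α × Bool)) : (L.map fun a => mk [a]).prod = mk L := by
  induction L with
  | nil => rfl
  | cons a L ih => rw [List.map_cons, List.prod_cons, ih, mul_mk]; rfl

variable [DecidableEq α]

/-- The letters of `v` cancel against those of `s` only up to the first position where `v` and
`invRev s` differ, so the cancellation in `x * y` stops strictly inside `s`. -/
theorem isPrefix_toWord_mul {x y : FreeGroup α} {A s v B : List (α × Bool)}
    (hx : x.toWord = A ++ s) (hy : y.toWord = v ++ B) (hlen : s.length = v.length)
    (hne : v ≠ invRev s) : A <+: (x * y).toWord := by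
  obtain ⟨p, a, b, t, t', hab, hs, rfl⟩ :=
    List.exists_append_cons_ne_of_length_eq (by rw [invRev_length, hlen]) hne.symm
  have hs' : s = invRev t ++ invRev [a] ++ invRev p := by
    rw [← invRev_invRev (L₁ := s), hs, invRev_append, invRev_cons]
  have hxy : x * y = mk (A ++ invRev t ++ invRev [a]) * mk (b :: t' ++ B) :=
    calc x * y = mk (A ++ invRev t ++ invRev [a]) * (mk p)⁻¹ * (mk p * mk (b :: t' ++ B)) := by
          rw [← mk_toWord (x := x), ← mk_toWord (x := y), hx, hy, hs', inv_mk]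
          simp only [mul_mk, List.append_assoc]
      _ = mk (A ++ invRev t ++ invRev [a]) * mk (b :: t' ++ B) := by group
  have hred : IsReduced (A ++ invRev t ++ invRev [a] ++ (b :: t' ++ B)) := by
    refine List.IsChain.append ?_ ?_ ?_
    · exact isReduced_toWord.infix (by rw [hx, hs']; exact ⟨[], invRev p, by simp⟩)
    · exact isReduced_toWord.infix (by rw [hy]; exact ⟨p, [], by simp⟩)
    · rw [show invRev [a] = [(a.1, !a.2)] from rfl]
      intro c hc d hd
      simp only [List.getLast?_append, List.getLast?_singleton, Option.some_or,
        Option.mem_some_iff, List.cons_append, List.head?_cons] at hc hd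
      subst hc hd
      obtain ⟨a₁, a₂⟩ := a
      obtain ⟨b₁, b₂⟩ := b
      rintro rfl
      cases a₂ <;> cases b₂ <;> simp_all
  rw [hxy, mul_mk, toWord_mk, hred.reduce_eq, List.append_assoc, List.append_assoc]
  exact List.prefix_append _ _

def symmetricWords (n : ℕ) : Set (FreeGroup α) :=
  {x | ∃ u : List (α × Bool), u.length = n ∧ x.toWord = u ++ u.reverse}

theorem inv_mem_symmetricWords {n : ℕ} {x : FreeGroup α} (hx : x ∈ symmetricWords n) :
    x⁻¹ ∈ symmetricWords n := by
  obtain ⟨u, rfl, hu⟩ := hx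
  exact ⟨invRev u.reverse, by simp [invRev_length], by rw [toWord_inv, hu, invRev_append_reverse]⟩

theorem take_isPrefix_toWord_prod {n : ℕ} :
    ∀ (x : FreeGroup α) (xs : List (FreeGroup α)), (∀ y ∈ x :: xs, y ∈ symmetricWords n) →
      (x :: xs).IsChain (fun a b => b ≠ a⁻¹) → x.toWord.take n <+: (x :: xs).prod.toWord
  | x, [], _, _ => by simpa using List.take_prefix n x.toWord
  | x, y :: ys, hmem, hchain => by
    obtain ⟨u, rfl, hu⟩ := hmem x (by simp)
    obtain ⟨v, hv, hvy⟩ := hmem y (by simp)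
    obtain ⟨B, hB⟩ := take_isPrefix_toWord_prod y ys (fun z hz => hmem z (by simp [hz]))
      hchain.tail
    rw [hvy, List.take_left' hv] at hB
    rw [hu, List.take_left, List.prod_cons]
    refine isPrefix_toWord_mul hu hB.symm (by simp [hv]) ?_
    rintro rfl
    apply (List.isChain_cons_cons.mp hchain).1
    rw [← toWord_inj, hvy, toWord_inv, hu, invRev_append_reverse]

theorem prod_ne_one_of_isChain {n : ℕ} (hn : 0 < n) {xs : List (FreeGroup α)} (hne : xs ≠ [])
    (hmem : ∀ x ∈ xs, x ∈ symmetricWords n) (hchain : xs.IsChain fun a b => b ≠ a⁻¹) :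
    xs.prod ≠ 1 := by
  obtain ⟨x, xs, rfl⟩ := List.exists_cons_of_ne_nil hne
  obtain ⟨u, rfl, hu⟩ := hmem x (by simp)
  intro h
  have := (take_isPrefix_toWord_prod x xs hmem hchain).length_le
  rw [h, toWord_one, hu, List.take_left] at this
  simp only [List.length_nil] at this
  omega

theorem mk_singleton_ne_inv_iff {a b : α × Bool} :
    mk [b] ≠ (mk [a])⁻¹ ↔ (a.1 = b.1 → a.2 = b.2) := by
  obtain ⟨a₁, a₂⟩ := a
  obtain ⟨b₁, b₂⟩ := b
  rw [inv_mk, Ne, ← toWord_inj, toWord_mk, toWord_mk, reduce_singleton,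
    show invRev [(a₁, a₂)] = [(a₁, !a₂)] from rfl, reduce_singleton, List.singleton_inj]
  cases a₂ <;> cases b₂ <;> simp [eq_comm]

end FreeGroup

open FreeGroup

def letter (k : ℤ) : ℕ × Bool := (k.natAbs, decide (0 < k))

theorem gen_eq_mk (k : ℤ) : gen k = mk [letter k] := by
  unfold gen letter
  split_ifs with hk
  · rw [show k.toNat = k.natAbs by omega, decide_eq_true hk]
    rfl
  · rw [show (-k).toNat = k.natAbs by omega, decide_eq_false hk, FreeGroup.of, inv_mk]
    rfl

theorem symmWord_eq_mk {n : ℕ} (k : Fin n → ℤ) :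
    symmWord k = mk (List.ofFn (letter ∘ k) ++ (List.ofFn (letter ∘ k)).reverse) := by
  have h : (List.ofFn fun j => gen (k j)) = (List.ofFn (letter ∘ k)).map fun a => mk [a] := by
    simp [List.map_ofFn, Function.comp_def, gen_eq_mk]
  rw [symmWord, h, ← List.map_reverse, prod_map_mk_singleton, prod_map_mk_singleton, mul_mk]

theorem Qset_subset_symmetricWords (n : ℕ) : Qset n ⊆ symmetricWords n := by
  rintro _ ⟨k, -, hk, rfl⟩
  have hL : IsReduced (List.ofFn (letter ∘ k)) := List.isChain_ofFn.mpr fun j hj =>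
    mk_singleton_ne_inv_iff.mp (by simpa only [Function.comp_apply, ← gen_eq_mk] using hk j hj)
  exact ⟨_, List.length_ofFn, by rw [symmWord_eq_mk, toWord_mk, hL.append_reverse.reduce_eq]⟩

/-- `Q_n` is a free subset of `F_∞`: no nonempty reduced product of elements of
`Q_n ∪ Q_n⁻¹` equals the identity. -/
theorem Qset_free (n : ℕ) (hn : 0 < n) :
    ∀ (m : ℕ), 0 < m → ∀ x : Fin m → FreeGroup ℕ,
      (∀ j, x j ∈ Qset n ∨ (x j)⁻¹ ∈ Qset n) →
      (∀ (j : ℕ) (h : j + 1 < m), x ⟨j + 1, h⟩ ≠ (x ⟨j, by omega⟩)⁻¹) →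
      (List.ofFn x).prod ≠ 1 := by
  intro m hm x hx hchain
  refine prod_ne_one_of_isChain hn (by simpa using hm.ne') ?_ (List.isChain_ofFn.mpr hchain)
  simp only [List.mem_ofFn]
  rintro _ ⟨j, rfl⟩
  rcases hx j with h | h
  · exact Qset_subset_symmetricWords n h
  · simpa using inv_mem_symmetricWords (Qset_subset_symmetricWords n h)
end

section
/- If ψ is a conditionally negative length on a discrete group G, then for each t > 0 the function g ↦ e^{−tψ(g)} is positive definite on G (Schoenberg's theorem): for all finitely supported a : G → ℂ, ∑_{g,h} conj(a_g) a_h e^{−tψ(g⁻¹h)} ≥ 0. -/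
/-!
The kernel `N g h = ψ (g⁻¹ * h)` is symmetric and conditionally negative definite. Fix a base
point `o`. For any such kernel `N`, the centered kernel `K i j = N i o + N o j - N i j - N o o`
is positive semidefinite: its quadratic form at `a` is minus that of `N` at `a - (∑ a) • δ_o`,
whose coefficients sum to zero. By the Schur product theorem the entrywise powers of a positive
semidefinite matrix are positive semidefinite, and positive semidefinite matrices form a closed
cone, so the entrywise exponential of `t • K` is positive semidefinite. Finally
`exp (-t N i j) = exp (t N o o) * d i * d j * exp (t K i j)` with `d i = exp (-t N i o)`,
a Hadamard product with a rank-one positive semidefinite matrix.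
-/

open ComplexOrder

open Filter Topology Nat

namespace Matrix

variable {ι R : Type*}

section Ring

variable [Ring R] [PartialOrder R] [StarRing R]

omit [PartialOrder R] in
theorem finsupp_sum_sum_eq_finset_sum (M : Matrix ι ι R) (x : ι →₀ R) {s : Finset ι}
    (hs : x.support ⊆ s) :
    (x.sum fun i xi => x.sum fun j xj => star xi * M i j * xj) =
      ∑ i ∈ s, ∑ j ∈ s, star (x i) * M i j * x j := by
  rw [Finsupp.sum_of_support_subset x hs _ (by simp)]
  exact Finset.sum_congr rfl fun i _ => Finsupp.sum_of_support_subset x hs _ (by simp)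

theorem PosSemidef.sum_finset_nonneg {M : Matrix ι ι R} (hM : M.PosSemidef) (s : Finset ι)
    (a : ι → R) : 0 ≤ ∑ i ∈ s, ∑ j ∈ s, star (a i) * M i j * a j := by
  classical
  have key := hM.2 (Finsupp.indicator s fun i _ => a i)
  rw [finsupp_sum_sum_eq_finset_sum M _ (Finsupp.support_indicator_subset _ _)] at key
  refine key.trans_eq (Finset.sum_congr rfl fun i hi => Finset.sum_congr rfl fun j hj => ?_)
  rw [Finsupp.indicator_of_mem hi, Finsupp.indicator_of_mem hj]

theorem posSemidef_of_sum_finset_nonneg {M : Matrix ι ι R} (hM : M.IsHermitian) (t : Finset ι)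
    (h : ∀ s, t ⊆ s → ∀ a : ι → R, 0 ≤ ∑ i ∈ s, ∑ j ∈ s, star (a i) * M i j * a j) :
    M.PosSemidef := by
  classical
  refine ⟨hM, fun x => ?_⟩
  rw [finsupp_sum_sum_eq_finset_sum M x Finset.subset_union_right]
  exact h _ Finset.subset_union_left x

theorem posSemidef_of_tendsto [TopologicalSpace R] [IsTopologicalRing R] [ContinuousStar R]
    [OrderClosedTopology R] {α : Type*} {l : Filter α} [l.NeBot] {M : α → Matrix ι ι R}
    {A : Matrix ι ι R} (hM : ∀ n, (M n).PosSemidef)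
    (hA : ∀ i j, Tendsto (fun n => M n i j) l (𝓝 (A i j))) : A.PosSemidef := by
  refine ⟨?_, fun x => ge_of_tendsto' (x := l) ?_ fun n => (hM n).2 x⟩
  · ext i j
    refine tendsto_nhds_unique (f := fun n => M n i j) (l := l) ?_ (hA i j)
    rw [conjTranspose_apply]
    simpa only [fun n => (hM n).1.apply i j] using (hA j i).star
  · exact tendsto_finsetSum _ fun i _ => tendsto_finsetSum _ fun j _ =>
      ((hA i j).const_mul _).mul_const _

end Ring

section CommRing

variable [CommRing R] [PartialOrder R] [StarRing R]

theorem posSemidef_vecMulVec_star_self' [StarOrderedRing R] (d : ι → R) :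
    (vecMulVec (star d) d).PosSemidef := by
  refine posSemidef_of_sum_finset_nonneg ?_ ∅ fun s _ a => ?_
  · ext i j
    simp [vecMulVec_apply, mul_comm]
  · have hsq : ∑ i ∈ s, ∑ j ∈ s, star (a i) * vecMulVec (star d) d i j * a j =
        star (∑ i ∈ s, d i * a i) * ∑ j ∈ s, d j * a j := by
      simp only [vecMulVec_apply, Pi.star_apply, star_sum, star_mul, Finset.sum_mul_sum]
      exact Finset.sum_congr rfl fun i _ => Finset.sum_congr rfl fun j _ => by ring
    rw [hsq]
    exact star_mul_self_nonneg _

omit [PartialOrder R] in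
theorem sum_sum_star_mul_centered_mul_eq [DecidableEq ι] (N : ι → ι → R) (s : Finset ι)
    {o : ι} (ho : o ∈ s) (a : ι → R) :
    ∑ i ∈ s, ∑ j ∈ s, star (a i) * (N i o + N o j - N i j - N o o) * a j =
      -∑ i ∈ s, ∑ j ∈ s, star (a i - (Pi.single o (∑ k ∈ s, a k) : ι → R) i) * N i j *
        (a j - (Pi.single o (∑ k ∈ s, a k) : ι → R) j) := by
  simp only [Pi.single_apply, star_sub, mul_sub, sub_mul, Finset.sum_sub_distrib,
    apply_ite star, star_zero, mul_ite, ite_mul, mul_zero, zero_mul, Finset.sum_ite_eq',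
    Finset.sum_ite_irrel, Finset.sum_const_zero, ho, if_true, mul_add, add_mul,
    Finset.sum_add_distrib]
  simp only [mul_assoc, ← Finset.sum_mul, ← Finset.mul_sum, star_sum]
  ring

end CommRing

theorem PosSemidef.map_pow {A : Matrix ι ι ℂ} (hA : A.PosSemidef) :
    ∀ n : ℕ, (A.map (· ^ n)).PosSemidef
  | 0 => by
    rw [show A.map (· ^ 0) = vecMulVec (star 1) 1 by ext; simp [vecMulVec_apply]]
    exact posSemidef_vecMulVec_star_self' 1
  | n + 1 => by
    rw [show A.map (· ^ (n + 1)) = A.map (· ^ n) ⊙ A by ext; simp [pow_succ]]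
    exact (hA.map_pow n).hadamard hA

theorem PosSemidef.map_exp {A : Matrix ι ι ℂ} (hA : A.PosSemidef) :
    (A.map Complex.exp).PosSemidef := by
  refine posSemidef_of_tendsto (l := atTop)
    (M := fun N => ∑ n ∈ Finset.range N, ((n ! : ℝ)⁻¹ • A.map (· ^ n)))
    (fun N => posSemidef_sum _ fun n _ => (hA.map_pow n).smul (by positivity)) fun i j => ?_
  simpa [Complex.exp_eq_exp_ℂ, sum_apply, div_eq_inv_mul] using
    (NormedSpace.expSeries_div_hasSum_exp (A i j)).tendsto_sum_nat

end Matrix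

def IsCondNegDef {ι : Type*} (N : ι → ι → ℝ) : Prop :=
  ∀ (s : Finset ι) (a : ι → ℂ), ∑ i ∈ s, a i = 0 →
    ∑ i ∈ s, ∑ j ∈ s, star (a i) * N i j * a j ≤ 0

namespace IsCondNegDef

open Matrix

variable {ι : Type*} {N : ι → ι → ℝ}

theorem posSemidef_centered (hN : IsCondNegDef N) (hsymm : ∀ i j, N i j = N j i) (o : ι) :
    (of fun i j => ((N i o + N o j - N i j - N o o : ℝ) : ℂ)).PosSemidef := by
  classical
  refine posSemidef_of_sum_finset_nonneg ?_ {o} fun s hs a => ?_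
  · ext i j
    simp only [conjTranspose_apply, of_apply, Complex.star_def, Complex.conj_ofReal, hsymm o i,
      hsymm o j, hsymm j i]
    ring_nf
  · have ho : o ∈ s := hs (Finset.mem_singleton_self o)
    have hb : ∑ i ∈ s, (a i - (Pi.single o (∑ k ∈ s, a k) : ι → ℂ) i) = 0 := by
      simp [Finset.sum_sub_distrib, ho]
    simp only [of_apply, Complex.ofReal_sub, Complex.ofReal_add]
    rw [sum_sum_star_mul_centered_mul_eq (fun i j => (N i j : ℂ)) s ho a]
    exact neg_nonneg.mpr (hN s _ hb)

theorem posSemidef_exp_neg_mul (hN : IsCondNegDef N) (hsymm : ∀ i j, N i j = N j i) {t : ℝ}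
    (ht : 0 ≤ t) : (of fun i j => (Real.exp (-t * N i j) : ℂ)).PosSemidef := by
  obtain hι | ⟨⟨o⟩⟩ := isEmpty_or_nonempty ι
  · rw [Subsingleton.elim (of _) 0]
    exact .zero
  set d : ι → ℂ := fun i => (Real.exp (-t * N i o) : ℂ)
  set K : Matrix ι ι ℂ := of fun i j => ((N i o + N o j - N i j - N o o : ℝ) : ℂ)
  have hexpK : ((t • K).map Complex.exp ⊙ vecMulVec (star d) d).PosSemidef :=
    ((hN.posSemidef_centered hsymm o).smul ht).map_exp.hadamard
      (posSemidef_vecMulVec_star_self' d)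
  have hfactor : (of fun i j => (Real.exp (-t * N i j) : ℂ)) =
      Real.exp (t * N o o) • ((t • K).map Complex.exp ⊙ vecMulVec (star d) d) := by
    ext i j
    simp only [K, d, of_apply, Matrix.smul_apply, map_apply, hadamard_apply, vecMulVec_apply,
      Pi.star_apply, Complex.star_def, Complex.conj_ofReal, Complex.real_smul]
    push_cast
    simp only [← Complex.exp_add]
    rw [hsymm j o]
    ring_nf
  rw [hfactor]
  exact hexpK.smul (Real.exp_pos _).le

end IsCondNegDef

namespace IsCondNegLength

variable {G : Type*} [Group G] {ψ : G → ℝ}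

theorem apply_inv_mul_comm (hψ : IsCondNegLength ψ) (g h : G) : ψ (g⁻¹ * h) = ψ (h⁻¹ * g) := by
  rw [hψ.2.1, mul_inv_rev, inv_inv]

theorem isCondNegDef (hψ : IsCondNegLength ψ) : IsCondNegDef fun g h : G => ψ (g⁻¹ * h) :=
  fun s a ha => (hψ.2.2 s a ha).trans_eq' <|
    Finset.sum_congr rfl fun _ _ => Finset.sum_congr rfl fun _ _ => mul_right_comm _ _ _

end IsCondNegLength

theorem schoenberg_pos_def_general {G : Type*} [Group G] (ψ : G → ℝ)
    (hψ : IsCondNegLength ψ) :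
    ∀ t : ℝ, 0 < t → ∀ (s : Finset G) (a : G → ℂ),
      0 ≤ ∑ g ∈ s, ∑ h ∈ s,
        (starRingEnd ℂ) (a g) * a h * (Real.exp (-t * ψ (g⁻¹ * h)) : ℂ) := by
  intro t ht s a
  have hexp := hψ.isCondNegDef.posSemidef_exp_neg_mul hψ.apply_inv_mul_comm ht.le
  exact (hexp.sum_finset_nonneg s a).trans_eq <|
    Finset.sum_congr rfl fun _ _ => Finset.sum_congr rfl fun _ _ => mul_right_comm _ _ _

/-- Schoenberg's theorem:  is positive definite when  is a
conditionally negative length. -/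
theorem schoenberg_pos_def {G : Type*} [Group G] (ψ : G → ℝ)
    (hnonneg : ∀ g, 0 ≤ ψ g) (hψ : IsCondNegLength ψ) :
    ∀ t : ℝ, 0 < t → ∀ (s : Finset G) (a : G → ℂ),
      0 ≤ ∑ g ∈ s, ∑ h ∈ s,
        (starRingEnd ℂ) (a g) * a h * (Real.exp (-t * ψ (g⁻¹ * h)) : ℂ) :=
  schoenberg_pos_def_general ψ hψ
end

section
/- The word length on the free group F_n (n ≥ 1) is a conditionally negative function: |e| = 0, |g| = |g⁻¹|, and ∑_{g,h} conj(a_g) a_h |g⁻¹h| ≤ 0 for all finitely supported a : F_n → ℂ with ∑_g a_g = 0. -/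
open ComplexOrder

/-!
Let `p(g, h)` be the longest common prefix of the reduced words of `g` and `h`. Cancelling it in
`g⁻¹h` gives `|g⁻¹h| = |g| + |h| - 2|p(g, h)|`, and `|p(g, h)| + 1` is the number of words `w` that
are prefixes of both. So `|g⁻¹h| = f g + f h - 2 ∑_w χ_w(g) χ_w(h)` with `f = |·| + 1` and `χ_w` the
indicator of having `w` as a prefix. Against coefficients with `∑ a_g = 0` the `f`-terms vanish,
and what remains is `-2 ∑_w |∑_g a_g χ_w(g)|² ≤ 0`.
-/

open Finset ComplexConjugate in
theorem sum_conj_mul_mul_nonpos_of_eq_add_sub_sum_mul {ι κ : Type*} {s : Finset ι} {a : ι → ℂ}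
    (ha : ∑ g ∈ s, a g = 0) (K : ι → ι → ℝ) (f : ι → ℝ) (T : Finset κ) (φ : κ → ι → ℝ)
    (hK : ∀ g ∈ s, ∀ h ∈ s, K g h = f g + f h - 2 * ∑ w ∈ T, φ w g * φ w h) :
    ∑ g ∈ s, ∑ h ∈ s, conj (a g) * a h * (K g h : ℂ) ≤ 0 := by
  set b : κ → ℂ := fun w => ∑ g ∈ s, a g * φ w g
  have hleft : ∑ g ∈ s, ∑ h ∈ s, conj (a g) * a h * (f g : ℂ) = 0 := by
    simp [← sum_mul, ← mul_sum, ha]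
  have hright : ∑ g ∈ s, ∑ h ∈ s, conj (a g) * a h * (f h : ℂ) = 0 := by
    simp_rw [mul_assoc, ← mul_sum, ← sum_mul, ← map_sum, ha, map_zero, zero_mul]
  have hsquares : ∑ g ∈ s, ∑ h ∈ s, conj (a g) * a h * ∑ w ∈ T, (φ w g * φ w h : ℂ)
      = ∑ w ∈ T, conj (b w) * b w := by
    calc ∑ g ∈ s, ∑ h ∈ s, conj (a g) * a h * ∑ w ∈ T, (φ w g * φ w h : ℂ)
        = ∑ g ∈ s, ∑ h ∈ s, ∑ w ∈ T, conj (a g * φ w g) * (a h * φ w h) := by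
          refine Finset.sum_congr rfl fun g _ => Finset.sum_congr rfl fun h _ => ?_
          rw [mul_sum]
          refine Finset.sum_congr rfl fun w _ => ?_
          rw [map_mul, Complex.conj_ofReal]
          ring
      _ = ∑ w ∈ T, ∑ g ∈ s, ∑ h ∈ s, conj (a g * φ w g) * (a h * φ w h) := by
          symm
          rw [sum_comm]
          exact Finset.sum_congr rfl fun g _ => sum_comm
      _ = ∑ w ∈ T, conj (b w) * b w := by simp only [b, map_sum, sum_mul_sum]
  calc ∑ g ∈ s, ∑ h ∈ s, conj (a g) * a h * (K g h : ℂ)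
      = ∑ g ∈ s, ∑ h ∈ s, (conj (a g) * a h * (f g : ℂ) + conj (a g) * a h * (f h : ℂ)
          - 2 * (conj (a g) * a h * ∑ w ∈ T, (φ w g * φ w h : ℂ))) := by
        refine Finset.sum_congr rfl fun g hg => Finset.sum_congr rfl fun h hh => ?_
        rw [hK g hg h hh]
        push_cast
        ring
    _ = -(2 * ∑ w ∈ T, conj (b w) * b w) := by
        simp only [sum_add_distrib, sum_sub_distrib, ← mul_sum, hleft, hright, hsquares]
        ring
    _ ≤ 0 := neg_nonpos.mpr <| mul_nonneg zero_le_two <|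
        sum_nonneg fun w _ => star_mul_self_nonneg _

namespace List

variable {β : Type*}

theorem nodup_inits : ∀ l : List β, l.inits.Nodup
  | [] => by simp
  | a :: l => by
    rw [inits_cons, nodup_cons]
    exact ⟨by simp, (nodup_inits l).map cons_injective⟩

variable [DecidableEq β]

def commonPrefix : List β → List β → List β
  | a :: u, b :: v => if a = b then a :: commonPrefix u v else []
  | _, _ => []

theorem prefix_commonPrefix_iff {w : List β} :
    ∀ {u v : List β}, w <+: commonPrefix u v ↔ w <+: u ∧ w <+: v
  | [], v => by simp only [commonPrefix, prefix_nil]; grind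
  | a :: u, [] => by simp only [commonPrefix, prefix_nil]; grind
  | a :: u, b :: v => by
    cases w with
    | nil => simp
    | cons c w =>
      by_cases hab : a = b
      · subst hab
        simp only [commonPrefix, ↓reduceIte, cons_prefix_cons, prefix_commonPrefix_iff]
        tauto
      · simp only [commonPrefix, hab, ↓reduceIte, prefix_nil, reduceCtorEq, cons_prefix_cons,
          false_iff, not_and, and_imp]
        grind

theorem card_filter_prefix_and_prefix {T : Finset (List β)} {u : List β}
    (hT : ∀ w, w <+: u → w ∈ T) (v : List β) :
    (T.filter fun w => w <+: u ∧ w <+: v).card = (commonPrefix u v).length + 1 := by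
  have : (T.filter fun w => w <+: u ∧ w <+: v) = (commonPrefix u v).inits.toFinset := by
    ext w
    simp only [Finset.mem_filter, mem_toFinset, mem_inits, prefix_commonPrefix_iff]
    exact ⟨And.right, fun h => ⟨hT w h.1, h⟩⟩
  rw [this, toFinset_card_of_nodup (nodup_inits _), length_inits]

end List

namespace FreeGroup

variable {α : Type*} [DecidableEq α]

theorem IsReduced.invRev {L : List (α × Bool)} (h : IsReduced L) : IsReduced (invRev L) := by
  rw [isReduced_iff_reduce_eq, reduce_invRev, h.reduce_eq]

theorem length_reduce_invRev_append_add {u v : List (α × Bool)} (hu : IsReduced u)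
    (hv : IsReduced v) :
    (reduce (invRev u ++ v)).length + 2 * (List.commonPrefix u v).length = u.length + v.length := by
  induction u generalizing v with
  | nil => simp [List.commonPrefix, hv.reduce_eq]
  | cons a u ih =>
    cases v with
    | nil => simp [List.commonPrefix, hu.invRev.reduce_eq, invRev_length]
    | cons b v =>
      by_cases hab : a = b
      · subst hab
        have hcancel : Red.Step (invRev (a :: u) ++ a :: v) (invRev u ++ v) := by
          simpa [invRev_cons, invRev] using
            Red.Step.not_rev (L₁ := invRev u) (L₂ := v) (x := a.1) (b := a.2)
        rw [reduce.Step.eq hcancel, List.commonPrefix, if_pos rfl]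
        have := ih (hu.infix (List.suffix_cons a u).isInfix)
          (hv.infix (List.suffix_cons a v).isInfix)
        simp only [List.length_cons]
        omega
      · have hred : IsReduced (invRev (a :: u) ++ b :: v) := by
          rw [invRev_cons]
          refine IsReduced.append_overlap (invRev_cons ▸ hu.invRev) ?_ (by simp [invRev])
          simp only [invRev, List.reverse_singleton, List.map_singleton, List.singleton_append]
          rw [isReduced_cons_cons]
          refine ⟨fun h1 => ?_, hv⟩
          obtain ⟨x, p⟩ := a
          obtain ⟨y, q⟩ := b
          dsimp only at h1 ⊢
          subst h1
          revert hab
          cases p <;> cases q <;> simp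
        rw [hred.reduce_eq, List.commonPrefix, if_neg hab]
        simp [invRev_length]

theorem norm_inv_mul_add_two_mul_length_commonPrefix (g h : FreeGroup α) :
    norm (g⁻¹ * h) + 2 * (g.toWord.commonPrefix h.toWord).length = norm g + norm h := by
  simpa [norm, toWord_mul, toWord_inv] using
    length_reduce_invRev_append_add isReduced_toWord isReduced_toWord

def prefixIndicator (w : List (α × Bool)) (g : FreeGroup α) : ℝ :=
  if w <+: g.toWord then 1 else 0

theorem norm_inv_mul_eq_sum_prefixIndicator {T : Finset (List (α × Bool))} {g : FreeGroup α}
    (hT : ∀ w, w <+: g.toWord → w ∈ T) (h : FreeGroup α) :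
    (norm (g⁻¹ * h) : ℝ) = (norm g + 1) + (norm h + 1)
      - 2 * ∑ w ∈ T, prefixIndicator w g * prefixIndicator w h := by
  simp only [prefixIndicator, ite_zero_mul_ite_zero, mul_one, Finset.sum_boole,
    List.card_filter_prefix_and_prefix hT]
  have key : (norm (g⁻¹ * h) : ℝ) + 2 * (g.toWord.commonPrefix h.toWord).length
      = norm g + norm h := by
    exact_mod_cast norm_inv_mul_add_two_mul_length_commonPrefix g h
  push_cast
  linarith

end FreeGroup

open FreeGroup in
theorem freeGroup_wordLength_condNeg_general (n : ℕ) :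
    FreeGroup.norm (1 : FreeGroup (Fin n)) = 0 ∧
    (∀ g : FreeGroup (Fin n), FreeGroup.norm g = FreeGroup.norm g⁻¹) ∧
    ∀ (s : Finset (FreeGroup (Fin n))) (a : FreeGroup (Fin n) → ℂ),
      (∑ g ∈ s, a g) = 0 →
      (∑ g ∈ s, ∑ h ∈ s,
        (starRingEnd ℂ) (a g) * a h * ((FreeGroup.norm (g⁻¹ * h) : ℝ) : ℂ)) ≤ 0 := by
  refine ⟨norm_one, fun g => norm_inv_eq.symm, fun s a ha => ?_⟩
  let T := s.biUnion fun g => g.toWord.inits.toFinset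
  have hT : ∀ g ∈ s, ∀ w, w <+: g.toWord → w ∈ T := fun g hg w hw =>
    Finset.mem_biUnion.mpr ⟨g, hg, List.mem_toFinset.mpr ((List.mem_inits _ _).mpr hw)⟩
  exact sum_conj_mul_mul_nonpos_of_eq_add_sub_sum_mul ha (fun g h => norm (g⁻¹ * h))
    (fun g => norm g + 1) T prefixIndicator
    fun g hg h _ => norm_inv_mul_eq_sum_prefixIndicator (hT g hg) h

/-- The word length on the free group `F_n` is conditionally negative. -/
theorem freeGroup_wordLength_condNeg (n : ℕ) (hn : 1 ≤ n) :
    FreeGroup.norm (1 : FreeGroup (Fin n)) = 0 ∧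
    (∀ g : FreeGroup (Fin n), FreeGroup.norm g = FreeGroup.norm g⁻¹) ∧
    ∀ (s : Finset (FreeGroup (Fin n))) (a : FreeGroup (Fin n) → ℂ),
      (∑ g ∈ s, a g) = 0 →
      (∑ g ∈ s, ∑ h ∈ s,
        (starRingEnd ℂ) (a g) * a h * ((FreeGroup.norm (g⁻¹ * h) : ℝ) : ℂ)) ≤ 0 :=
  freeGroup_wordLength_condNeg_general n
end
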